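/- Let L/K be a finite Galois field extension and let G be a group acting on L via a surjective homomorphism σ : G → Gal(L/K) with kernel H. Then the inclusion of K-algebras L[H] ↪ L ⋊ G is a Frobenius extension: there is an (L[H], L[H])-bimodule homomorphism E : L ⋊ G → L[H] and elements x₁,…,xₙ, y₁,…,yₙ ∈ L ⋊ G with Σᵢ E(s·xᵢ)yᵢ = s = Σᵢ xᵢE(yᵢ·s) for all s ∈ L ⋊ G. -/

import Mathlib

/-!
The projection `E : L ⋊ G → L[H]` keeps the terms supported on `H = ker σ`. It is
`L[H]`-bilinear because multiplying by elements of `H` on either side preserves membership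
in `H` and `H` acts trivially on `L`. If the `tᵢ` meet every coset of `H` exactly once, then
`g tᵢ⁻¹ ∈ H` for exactly one `i`, so `Σᵢ E(s tᵢ⁻¹) tᵢ` recovers each monomial of `s`, and
symmetrically `Σᵢ tᵢ⁻¹ E(tᵢ s) = s`.
-/

open Finsupp

variable {K L : Type*} [Field K] [Field L] [Algebra K L]
variable {G : Type*} [Group G]

/-- The multiplication of the skew group ring `L ⋊ G` modelled on `G →₀ L`. -/
noncomputable def skewMul (σ : G →* (L ≃ₐ[K] L)) (x y : G →₀ L) : G →₀ L :=
  x.sum fun g₁ r₁ => y.sum fun g₂ r₂ => Finsupp.single (g₁ * g₂) (r₁ * σ g₁ r₂)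

/-- The inclusion `L[H] ↪ L ⋊ G` of the group algebra of `H = ker σ`. -/
noncomputable def inclH (σ : G →* (L ≃ₐ[K] L)) (a : MonoidAlgebra L σ.ker) : G →₀ L :=
  Finsupp.mapDomain (fun h : σ.ker => (h : G)) a.coeff

lemma Fintype.sum_ite_eq_of_existsUnique {ι M : Type*} [Fintype ι] [AddCommMonoid M]
    {p : ι → Prop} [DecidablePred p] (hp : ∃! i, p i) (c : M) : ∑ i, (if p i then c else 0) = c := by
  obtain ⟨i₀, hi₀, huniq⟩ := hp
  rw [Finset.sum_eq_single i₀ (fun i _ hi => if_neg (mt (huniq i) hi))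
    (fun h => absurd (Finset.mem_univ i₀) h), if_pos hi₀]

namespace SkewGroupRing

variable (σ : G →* (L ≃ₐ[K] L))

lemma skewMul_single (g₁ g₂ : G) (r₁ r₂ : L) :
    skewMul σ (single g₁ r₁) (single g₂ r₂) = single (g₁ * g₂) (r₁ * σ g₁ r₂) := by
  unfold skewMul
  rw [sum_single_index, sum_single_index] <;> simp

lemma skewMul_zero_left (y : G →₀ L) : skewMul σ 0 y = 0 :=
  sum_zero_index

lemma skewMul_zero_right (x : G →₀ L) : skewMul σ x 0 = 0 := by
  simp [skewMul]

lemma skewMul_add_left (x₁ x₂ y : G →₀ L) :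
    skewMul σ (x₁ + x₂) y = skewMul σ x₁ y + skewMul σ x₂ y := by
  classical
  refine sum_add_index (fun g _ => by simp) fun g _ r₁ r₂ => ?_
  rw [← sum_add]
  exact sum_congr fun g₂ _ => by rw [add_mul, single_add]

lemma skewMul_add_right (x y₁ y₂ : G →₀ L) :
    skewMul σ x (y₁ + y₂) = skewMul σ x y₁ + skewMul σ x y₂ := by
  classical
  rw [skewMul, skewMul, skewMul, ← sum_add]
  refine sum_congr fun g₁ _ => sum_add_index (fun g _ => by simp) fun g _ r₁ r₂ => ?_
  rw [map_add, mul_add, single_add]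

lemma inclH_single (h : σ.ker) (r : L) :
    inclH σ (MonoidAlgebra.single h r) = single (h : G) r :=
  mapDomain_single

lemma inclH_zero : inclH σ 0 = 0 := mapDomain_zero

lemma inclH_add (a b : MonoidAlgebra L σ.ker) :
    inclH σ (a + b) = inclH σ a + inclH σ b := mapDomain_add

noncomputable def projE : (G →₀ L) →+ MonoidAlgebra L σ.ker :=
  MonoidAlgebra.coeffAddEquiv.symm.toAddMonoidHom.comp
    (comapDomain.addMonoidHom (f := (Subtype.val : σ.ker → G)) Subtype.val_injective)

open scoped Classical in
lemma projE_single (g : G) (r : L) :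
    projE σ (single g r) = if h : g ∈ σ.ker then MonoidAlgebra.single ⟨g, h⟩ r else 0 := by
  ext a
  change comapDomain _ (single g r) _ a = _
  rw [comapDomain_apply]
  split_ifs with hg
  · simp [single_apply, Subtype.ext_iff, eq_comm]
  · have : g ≠ (a : G) := fun h => hg (h ▸ a.2)
    simp [this]

open scoped Classical in
lemma inclH_projE_single (g : G) (r : L) :
    inclH σ (projE σ (single g r)) = if g ∈ σ.ker then single g r else 0 := by
  rw [projE_single]
  split_ifs
  · exact inclH_single σ _ r
  · exact inclH_zero σ

lemma projE_single_mul_single_mul_single (h₁ h₂ : σ.ker) (g : G) (r₁ r r₂ : L) :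
    projE σ (skewMul σ (skewMul σ (single h₁ r₁) (single g r)) (single h₂ r₂)) =
      MonoidAlgebra.single h₁ r₁ * projE σ (single g r) * MonoidAlgebra.single h₂ r₂ := by
  have hσ₁ : σ (h₁ : G) = 1 := h₁.2
  have hmem : (h₁ : G) * g * h₂ ∈ σ.ker ↔ g ∈ σ.ker := by
    rw [Subgroup.mul_mem_cancel_right _ h₂.2, Subgroup.mul_mem_cancel_left _ h₁.2]
  rw [skewMul_single, skewMul_single, projE_single, projE_single]
  by_cases hg : g ∈ σ.ker
  · have hσg : σ g = 1 := hg
    rw [dif_pos (hmem.2 hg), dif_pos hg, MonoidAlgebra.single_mul_single,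
      MonoidAlgebra.single_mul_single]
    congr 1
    simp [hσ₁, hσg, mul_assoc]
  · rw [dif_neg (mt hmem.1 hg), dif_neg hg, mul_zero, zero_mul]

lemma projE_inclH_mul_mul_inclH (a b : MonoidAlgebra L σ.ker) (s : G →₀ L) :
    projE σ (skewMul σ (skewMul σ (inclH σ a) s) (inclH σ b)) = a * projE σ s * b := by
  induction a using MonoidAlgebra.induction_linear with
  | zero => simp only [inclH_zero, skewMul_zero_left, map_zero, zero_mul]
  | add a₁ a₂ ih₁ ih₂ =>
    rw [inclH_add, skewMul_add_left, skewMul_add_left, map_add, ih₁, ih₂, add_mul, add_mul]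
  | single h₁ r₁ =>
  induction b using MonoidAlgebra.induction_linear with
  | zero => simp only [inclH_zero, skewMul_zero_right, map_zero, mul_zero]
  | add b₁ b₂ ih₁ ih₂ => rw [inclH_add, skewMul_add_right, map_add, ih₁, ih₂, mul_add]
  | single h₂ r₂ =>
  induction s using Finsupp.induction_linear with
  | zero => simp only [skewMul_zero_right, skewMul_zero_left, map_zero, mul_zero, zero_mul]
  | add s₁ s₂ ih₁ ih₂ =>
    rw [skewMul_add_right, skewMul_add_left, map_add, map_add, ih₁, ih₂, mul_add, add_mul]
  | single g r =>
    rw [inclH_single, inclH_single, projE_single_mul_single_mul_single]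

section Transversal

variable {σ} {ι : Type*} [Fintype ι] {t : ι → G}

lemma sum_inclH_projE_mul_inv_mul (ht : ∀ g, ∃! i, σ (t i) = σ g) (s : G →₀ L) :
    ∑ i, skewMul σ (inclH σ (projE σ (skewMul σ s (single (t i)⁻¹ 1)))) (single (t i) 1) = s := by
  classical
  induction s using Finsupp.induction_linear with
  | zero => simp only [skewMul_zero_left, map_zero, inclH_zero, Finset.sum_const_zero]
  | add s₁ s₂ ih₁ ih₂ =>
    simp only [skewMul_add_left, map_add, inclH_add, Finset.sum_add_distrib, ih₁, ih₂]
  | single g r =>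
    have hmem : ∀ i, g * (t i)⁻¹ ∈ σ.ker ↔ σ (t i) = σ g := fun i => by
      rw [MonoidHom.mem_ker, map_mul_inv, mul_inv_eq_one, eq_comm]
    refine (Finset.sum_congr rfl fun i _ => ?_).trans
      (Fintype.sum_ite_eq_of_existsUnique (ht g) _)
    rw [skewMul_single, map_one, mul_one, inclH_projE_single]
    simp only [hmem]
    split_ifs
    · rw [skewMul_single, map_one, mul_one, inv_mul_cancel_right]
    · exact skewMul_zero_left σ _

lemma sum_inv_mul_inclH_projE_mul (ht : ∀ g, ∃! i, σ (t i) = σ g) (s : G →₀ L) :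
    ∑ i, skewMul σ (single (t i)⁻¹ 1) (inclH σ (projE σ (skewMul σ (single (t i) 1) s))) = s := by
  classical
  induction s using Finsupp.induction_linear with
  | zero => simp only [skewMul_zero_right, map_zero, inclH_zero, Finset.sum_const_zero]
  | add s₁ s₂ ih₁ ih₂ =>
    simp only [skewMul_add_right, map_add, inclH_add, Finset.sum_add_distrib, ih₁, ih₂]
  | single g r =>
    have hmem : ∀ i, t i * g ∈ σ.ker ↔ σ (t i) = σ g⁻¹ := fun i => by
      rw [MonoidHom.mem_ker, map_mul, map_inv, mul_eq_one_iff_eq_inv]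
    refine (Finset.sum_congr rfl fun i _ => ?_).trans
      (Fintype.sum_ite_eq_of_existsUnique (ht g⁻¹) _)
    rw [skewMul_single, one_mul, inclH_projE_single]
    simp only [hmem]
    split_ifs
    · rw [skewMul_single, one_mul, ← AlgEquiv.mul_apply, ← map_mul, inv_mul_cancel, map_one,
        AlgEquiv.one_apply, inv_mul_cancel_left]
    · exact skewMul_zero_right σ _

end Transversal

end SkewGroupRing

theorem stmt2 [FiniteDimensional K L]
    (σ : G →* (L ≃ₐ[K] L)) (hσ : Function.Surjective σ) :
    ∃ (E : (G →₀ L) →+ MonoidAlgebra L σ.ker) (n : ℕ)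
      (x y : Fin n → (G →₀ L)),
      (∀ (a b : MonoidAlgebra L σ.ker) (s : G →₀ L),
        E (skewMul σ (skewMul σ (inclH σ a) s) (inclH σ b)) = a * E s * b) ∧
      (∀ s : G →₀ L,
        ∑ i : Fin n, skewMul σ (inclH σ (E (skewMul σ s (x i)))) (y i) = s) ∧
      (∀ s : G →₀ L,
        ∑ i : Fin n, skewMul σ (x i) (inclH σ (E (skewMul σ (y i) s))) = s) := by
  let e := (Fintype.equivFin (L ≃ₐ[K] L)).symm
  let t : Fin _ → G := fun i => Function.surjInv hσ (e i)
  have ht : ∀ g, ∃! i, σ (t i) = σ g := fun g => by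
    simpa only [t, Function.surjInv_eq hσ] using e.bijective.existsUnique (σ g)
  exact ⟨SkewGroupRing.projE σ, _, fun i => single (t i)⁻¹ 1, fun i => single (t i) 1,
    SkewGroupRing.projE_inclH_mul_mul_inclH σ, SkewGroupRing.sum_inclH_projE_mul_inv_mul ht,
    SkewGroupRing.sum_inv_mul_inclH_projE_mul ht⟩
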